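/- arXiv:0807.1681 — 2 statements merged into one kernel-verified Lean document; each statement's English description precedes it below -/
import Mathlib

section
/- If V : ℝ^d → ℝ is C¹ and z is a saddle of V (i.e. there exists ε > 0 such that the set {y : V(y) < V(z), V̄(y,z) = V(z)} intersected with the ball B_ε(z) is non-empty and not path-connected, while its union with {z} intersected with B_ε(z) is path-connected), then z is a stationary point of V, i.e. ∇V(z) = 0. -/
/-!
If `∇V(z) ≠ 0`, pick a unit vector `u` along which `V` strictly decreases on a small closed
ball `B̄_r(z) ⊆ B_ε(z)`. The map `F w = w + max 0 (r - |w - z|) • u` pushes every point of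
`(OV(z) ∪ {z}) ∩ B_ε(z)`, and in particular `z` itself, into `OV(z) ∩ B_ε(z)` (the segment back
to the original point stays below `V(z)`, so communication with `z` at height `V(z)` survives),
while each point of `OV(z) ∩ B_ε(z)` is joined to its image by a segment inside that set.
Composing a path of the path-connected set `(OV(z) ∪ {z}) ∩ B_ε(z)` with `F` then makes
`OV(z) ∩ B_ε(z)` path-connected.
-/

open Metric Set

/-- Communication height between `x` and `y`: the lowest level `c` such that some
continuous path from `x` to `y` stays below `c`. -/
noncomputable def commHeight {d : ℕ} (V : EuclideanSpace ℝ (Fin d) → ℝ)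
    (x y : EuclideanSpace ℝ (Fin d)) : ℝ :=
  sInf {c : ℝ | ∃ γ : Path x y, ∀ t, V (γ t) ≤ c}

/-- The open valley of `z`. -/
def openValley {d : ℕ} (V : EuclideanSpace ℝ (Fin d) → ℝ)
    (z : EuclideanSpace ℝ (Fin d)) : Set (EuclideanSpace ℝ (Fin d)) :=
  {y | commHeight V y z = V z ∧ V y < V z}

/-- `z` is a saddle of `V` in the valley sense. -/
def IsSaddle {d : ℕ} (V : EuclideanSpace ℝ (Fin d) → ℝ)
    (z : EuclideanSpace ℝ (Fin d)) : Prop :=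
  ∃ ε > 0, (openValley V z ∩ ball z ε).Nonempty ∧
    ¬ IsPathConnected (openValley V z ∩ ball z ε) ∧
    IsPathConnected ((openValley V z ∪ {z}) ∩ ball z ε)

theorem IsPathConnected.of_continuous_mapsTo {X : Type*} [TopologicalSpace X] {S T : Set X}
    (hS : IsPathConnected S) (hTS : T ⊆ S) (hT : T.Nonempty) {F : X → X} (hF : Continuous F)
    (hFST : MapsTo F S T) (hFT : ∀ y ∈ T, JoinedIn T y (F y)) : IsPathConnected T := by
  refine isPathConnected_iff.2 ⟨hT, fun a ha b hb => ?_⟩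
  have hFab : JoinedIn T (F a) (F b) :=
    ((hS.joinedIn a (hTS ha) b (hTS hb)).map hF).mono (image_subset_iff.2 hFST)
  exact ((hFT a ha).trans hFab).trans (hFT b hb).symm

section NormedSpace

variable {E : Type*} [NormedAddCommGroup E] [NormedSpace ℝ E]

theorem ContinuousLinearMap.exists_norm_eq_one_apply_neg {L : E →L[ℝ] ℝ} (hL : L ≠ 0) :
    ∃ u : E, ‖u‖ = 1 ∧ L u < 0 := by
  obtain ⟨v, hv⟩ := DFunLike.ne_iff.1 hL
  have hv : L v ≠ 0 := hv
  set w : E := -L v • v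
  have hLw : L w < 0 := by
    simpa only [w, map_smul, smul_eq_mul, neg_mul, neg_neg_iff_pos] using mul_self_pos.2 hv
  have hw : w ≠ 0 := fun h => hLw.ne (by rw [h, map_zero])
  refine ⟨‖w‖⁻¹ • w, norm_smul_inv_norm hw, ?_⟩
  rw [map_smul, smul_eq_mul]
  exact mul_neg_of_pos_of_neg (by positivity) hLw

theorem joinedIn_add_smul {S : Set E} {x u : E} {σ : ℝ} (hσ : 0 ≤ σ)
    (h : ∀ θ ∈ Icc 0 σ, x + θ • u ∈ S) : JoinedIn S x (x + σ • u) := by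
  refine JoinedIn.ofLine (f := fun θ => x + (θ * σ) • u) (by fun_prop) (by simp) (by simp) ?_
  rintro _ ⟨θ, ⟨hθ0, hθ1⟩, rfl⟩
  exact h _ ⟨mul_nonneg hθ0 hσ, mul_le_of_le_one_left hσ hθ1⟩

theorem strictAntiOn_add_smul {V : E → ℝ} (hV : Differentiable ℝ V) {y u : E} {D : Set ℝ}
    (hD : Convex ℝ D) (hneg : ∀ θ ∈ D, fderiv ℝ V (y + θ • u) u < 0) :
    StrictAntiOn (fun θ : ℝ => V (y + θ • u)) D := by
  have hderiv : ∀ θ : ℝ, HasDerivAt (fun θ : ℝ => V (y + θ • u)) (fderiv ℝ V (y + θ • u) u) θ :=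
    fun θ => (hV _).hasFDerivAt.comp_hasDerivAt θ
      (by simpa using ((hasDerivAt_id θ).smul_const u).const_add y)
  refine strictAntiOn_of_deriv_neg hD (fun θ _ => (hderiv θ).continuousAt.continuousWithinAt)
    fun θ hθ => ?_
  rw [(hderiv θ).deriv]
  exact hneg θ (interior_subset hθ)

theorem dist_add_smul_le {y z u : E} (hu : ‖u‖ = 1) {θ : ℝ} (hθ : 0 ≤ θ) :
    dist (y + θ • u) z ≤ dist y z + θ :=
  calc dist (y + θ • u) z ≤ dist (y + θ • u) y + dist y z := dist_triangle _ _ _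
    _ = dist y z + θ := by rw [dist_self_add_left, norm_smul, hu, Real.norm_of_nonneg hθ]; ring

end NormedSpace

section Valley

variable {d : ℕ} {V : EuclideanSpace ℝ (Fin d) → ℝ} {y z w : EuclideanSpace ℝ (Fin d)}

theorem commHeight_eq_of_forall_joinedIn (h : ∀ δ > 0, JoinedIn {x | V x ≤ V z + δ} w z) :
    commHeight V w z = V z := by
  have hmem : ∀ δ > 0, V z + δ ∈ {c : ℝ | ∃ γ : Path w z, ∀ t, V (γ t) ≤ c} := h
  have hlow : V z ∈ lowerBounds {c : ℝ | ∃ γ : Path w z, ∀ t, V (γ t) ≤ c} := by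
    rintro c ⟨γ, hγ⟩
    simpa using hγ 1
  exact le_antisymm (le_of_forall_pos_le_add fun δ hδ => csInf_le ⟨_, hlow⟩ (hmem δ hδ))
    (le_csInf ⟨_, hmem 1 one_pos⟩ hlow)

theorem joinedIn_sublevel_of_mem_openValley (hV : Continuous V) (hy : y ∈ openValley V z ∪ {z})
    {δ : ℝ} (hδ : 0 < δ) : JoinedIn {x | V x ≤ V z + δ} y z := by
  rcases hy with hy | rfl
  · have hne : {c : ℝ | ∃ γ : Path y z, ∀ t, V (γ t) ≤ c}.Nonempty := by
      let γ := (PathConnectedSpace.joined y z).somePath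
      obtain ⟨C, hC⟩ := (isCompact_range (hV.comp γ.continuous)).bddAbove
      exact ⟨C, γ, fun t => hC ⟨t, rfl⟩⟩
    obtain ⟨c, ⟨γ, hγ⟩, hc⟩ := exists_lt_of_csInf_lt hne (hy.1.trans_lt (lt_add_of_pos_right _ hδ))
    exact ⟨γ, fun t => (hγ t).trans hc.le⟩
  · exact JoinedIn.refl (by simpa using hδ.le)

theorem mem_openValley_of_joinedIn (hV : Continuous V) (hy : y ∈ openValley V z ∪ {z})
    (hwy : JoinedIn {x | V x ≤ V z} w y) (hw : V w < V z) : w ∈ openValley V z := by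
  refine ⟨commHeight_eq_of_forall_joinedIn fun δ hδ => ?_, hw⟩
  have hsub : {x | V x ≤ V z} ⊆ {x | V x ≤ V z + δ} := fun x (hx : V x ≤ V z) =>
    show V x ≤ V z + δ by linarith
  exact (hwy.mono hsub).trans (joinedIn_sublevel_of_mem_openValley hV hy hδ)

theorem add_smul_mem_openValley (hV : Differentiable ℝ V) {u : EuclideanSpace ℝ (Fin d)}
    (hu : ‖u‖ = 1) {r : ℝ} (hneg : ∀ x ∈ closedBall z r, fderiv ℝ V x u < 0)
    (hy : y ∈ openValley V z ∪ {z}) {σ : ℝ} (hσ : 0 < σ) (hσr : dist y z + σ ≤ r) :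
    y + σ • u ∈ openValley V z := by
  have hseg : ∀ θ ∈ Icc 0 σ, y + θ • u ∈ closedBall z r := fun θ hθ =>
    (dist_add_smul_le hu hθ.1).trans (by linarith [hθ.2])
  have hanti := strictAntiOn_add_smul hV (convex_Icc 0 σ)
    fun θ hθ => hneg _ (hseg θ hθ)
  have hVy : V y ≤ V z :=
    hy.elim (fun hy => hy.2.le) fun hy => (congrArg V (mem_singleton_iff.1 hy)).le
  have h0 : (0 : ℝ) ∈ Icc 0 σ := left_mem_Icc.2 hσ.le
  refine mem_openValley_of_joinedIn hV.continuous hy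
    (joinedIn_add_smul hσ.le fun θ hθ => ?_).symm ?_
  · exact ((hanti.antitoneOn h0 hθ hθ.1).trans_eq (by simp)).trans hVy
  · exact ((hanti h0 (right_mem_Icc.2 hσ.le) hσ).trans_eq (by simp)).trans_le hVy

theorem add_smul_mem_openValley_inter_ball (hV : Differentiable ℝ V) {u : EuclideanSpace ℝ (Fin d)}
    (hu : ‖u‖ = 1) {r ε : ℝ} (hneg : ∀ x ∈ closedBall z r, fderiv ℝ V x u < 0)
    (hball : closedBall z r ⊆ ball z ε) (hy : y ∈ openValley V z ∪ {z}) (hyε : y ∈ ball z ε)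
    {θ : ℝ} (hθ : 0 ≤ θ) (hθr : θ ≤ max 0 (r - dist y z)) (hθy : 0 < θ ∨ y ∈ openValley V z) :
    y + θ • u ∈ openValley V z ∩ ball z ε := by
  rcases hθ.eq_or_lt with rfl | hθ
  · simpa using ⟨hθy.resolve_left (lt_irrefl 0), hyε⟩
  · have hθr : dist y z + θ ≤ r := by linarith [(le_max_iff.1 hθr).resolve_left hθ.not_ge]
    exact ⟨add_smul_mem_openValley hV hu hneg hy hθ hθr,
      hball ((dist_add_smul_le hu hθ.le).trans hθr)⟩

end Valley

/-- If `V` is `C¹` and `z` is a saddle, then `z` is a stationary point. -/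
theorem saddle_is_stationary {d : ℕ} (V : EuclideanSpace ℝ (Fin d) → ℝ)
    (hV : ContDiff ℝ 1 V) (z : EuclideanSpace ℝ (Fin d)) (hz : IsSaddle V z) :
    fderiv ℝ V z = 0 := by
  by_contra hL
  obtain ⟨ε, hε, hne, hnc, hpc⟩ := hz
  obtain ⟨u, hu, hVu⟩ := ContinuousLinearMap.exists_norm_eq_one_apply_neg hL
  have hcont : Continuous fun x => fderiv ℝ V x u :=
    (hV.continuous_fderiv one_ne_zero).clm_apply continuous_const
  obtain ⟨r, hr, hsub⟩ := nhds_basis_closedBall.mem_iff.1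
    (Filter.inter_mem ((hcont.tendsto z).eventually_lt_const hVu) (ball_mem_nhds z hε))
  obtain ⟨hneg, hball⟩ := subset_inter_iff.1 hsub
  have hmem := fun y =>
    add_smul_mem_openValley_inter_ball (y := y) (hV.differentiable one_ne_zero) hu hneg hball
  refine hnc (hpc.of_continuous_mapsTo (fun y hy => ⟨Or.inl hy.1, hy.2⟩) hne
    (F := fun x => x + max 0 (r - dist x z) • u) (by fun_prop) ?_ ?_)
  · rintro y ⟨hy, hyε⟩
    refine hmem y hy hyε (le_max_left _ _) le_rfl ?_
    rcases hy with hy | rfl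
    · exact Or.inr hy
    · exact Or.inl (by simpa using hr)
  · rintro y ⟨hy, hyε⟩
    exact joinedIn_add_smul (le_max_left _ _) fun θ hθ =>
      hmem y (Or.inl hy) hyε hθ.1 hθ.2 (Or.inr hy)
end

section
/- If V : ℝ^d → ℝ is C² and z is a saddle of V, then the Hessian matrix of V at z has at least one eigenvalue ≤ 0. -/
/-!
If `∇V(z) ≠ 0`, pick a short descent vector `u`. For `x` near `z`, `V` decreases along
`x + [0,1] • u` and `V (x + u) < V z`, so every such point `x + τ • u` below `V z` lies in the open
valley: it is joined to `z` below `V z` through `x + u` and `z + u`. Two valley points near `z`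
are then joined inside the valley through their translates by `u`, so a path in
`(OV(z) ∪ {z}) ∩ B_ε(z)` passing through `z` can be rerouted around `z`, and `OV(z) ∩ B_ε(z)` is
path-connected. If `∇V(z) = 0` and the Hessian is positive definite, `z` is a strict local
minimum; every path from a point below `V z` to `z` crosses a small sphere on which `V > V z`,
so the open valley is empty. In neither case is `z` a saddle.
-/

open Metric Set

/-- The Hessian matrix of `V` at `z` in the standard coordinates. -/
noncomputable def hessianMatrix {d : ℕ} (V : EuclideanSpace ℝ (Fin d) → ℝ)
    (z : EuclideanSpace ℝ (Fin d)) : Matrix (Fin d) (Fin d) ℝ :=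
  fun i j => fderiv ℝ (fun x => fderiv ℝ V x (EuclideanSpace.single j 1)) z
    (EuclideanSpace.single i 1)

open Filter Topology

section PathSplicing

variable {X : Type*} [TopologicalSpace X]

theorem JoinedIn.of_image_Icc_subset {F : Set X} {f : ℝ → X} {s t : ℝ}
    (hf : ContinuousOn f (Icc s t)) (hst : s ≤ t) (h : f '' Icc s t ⊆ F) :
    JoinedIn F (f s) (f t) :=
  ((((convex_Icc s t).isPathConnected (nonempty_Icc.2 hst)).image' hf).joinedIn _
    ⟨s, left_mem_Icc.2 hst, rfl⟩ _ ⟨t, right_mem_Icc.2 hst, rfl⟩).mono h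

theorem Path.exists_joinedIn_mem_nhds_of_mem_range [T1Space X] {A : Set X} {a b z : X}
    (γ : Path a b) (hγ : ∀ t, γ t ∈ insert z A) (ha : a ≠ z) (hz : z ∈ range γ)
    {N : Set X} (hN : N ∈ 𝓝 z) : ∃ a' ∈ A ∩ N, JoinedIn A a a' := by
  set K := Icc (0 : ℝ) 1 ∩ γ.extend ⁻¹' {z}
  have hK : IsClosed K := isClosed_Icc.inter (isClosed_singleton.preimage γ.continuous_extend)
  have hKne : K.Nonempty := by
    obtain ⟨t, ht⟩ := hz
    exact ⟨t, t.2, by simp [ht]⟩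
  have hKbdd : BddBelow K := ⟨0, fun t ht => ht.1.1⟩
  set t₁ := sInf K
  have ht₁ : t₁ ∈ K := hK.csInf_mem hKne hKbdd
  have ht₁pos : 0 < t₁ := by
    refine ht₁.1.1.lt_of_ne fun h => ha ?_
    simpa [← h] using ht₁.2
  have hbefore : ∀ σ ∈ Icc 0 t₁, σ < t₁ → γ.extend σ ∈ A := fun σ hσ hlt => by
    have hσ1 : σ ∈ Icc (0 : ℝ) 1 := ⟨hσ.1, hσ.2.trans ht₁.1.2⟩
    exact (γ.extend_apply hσ1 ▸ hγ ⟨σ, hσ1⟩ : γ.extend σ ∈ insert z A).resolve_left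
      fun h => (csInf_le hKbdd ⟨hσ1, h⟩).not_gt hlt
  have hnear : ∀ᶠ τ in 𝓝[<] t₁, τ ∈ Ioo 0 t₁ ∧ γ.extend τ ∈ N :=
    Filter.Eventually.and (Ioo_mem_nhdsLT ht₁pos) (nhdsWithin_le_nhds
      (γ.continuous_extend.continuousAt.preimage_mem_nhds ((show γ.extend t₁ = z from ht₁.2) ▸ hN)))
  obtain ⟨τ, hτ, hτN⟩ := hnear.exists
  refine ⟨γ.extend τ, ⟨hbefore τ ⟨hτ.1.le, hτ.2.le⟩ hτ.2, hτN⟩, ?_⟩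
  simpa using JoinedIn.of_image_Icc_subset γ.continuous_extend.continuousOn hτ.1.le
    (image_subset_iff.2 fun σ hσ => hbefore σ ⟨hσ.1, hσ.2.trans hτ.2.le⟩ (hσ.2.trans_lt hτ.2))

theorem IsPathConnected.of_insert [T1Space X] {A : Set X} {z : X} (hzA : z ∉ A)
    (hA : A.Nonempty) (hins : IsPathConnected (insert z A)) {N : Set X} (hN : N ∈ 𝓝 z)
    (hjoin : ∀ a ∈ A ∩ N, ∀ b ∈ A ∩ N, JoinedIn A a b) : IsPathConnected A := by
  refine isPathConnected_iff.2 ⟨hA, fun a ha b hb => ?_⟩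
  obtain ⟨γ, hγ⟩ := hins.joinedIn a (mem_insert_of_mem _ ha) b (mem_insert_of_mem _ hb)
  by_cases hz : z ∈ range γ
  · obtain ⟨a', ha', haa'⟩ := γ.exists_joinedIn_mem_nhds_of_mem_range hγ
      (ne_of_mem_of_not_mem ha hzA) hz hN
    obtain ⟨b', hb', hbb'⟩ := γ.symm.exists_joinedIn_mem_nhds_of_mem_range (fun t => hγ _)
      (ne_of_mem_of_not_mem hb hzA) (by simpa using hz) hN
    exact haa'.trans ((hjoin a' ha' b' hb').trans hbb'.symm)
  · exact ⟨γ, fun t => (hγ t).resolve_left fun h => hz ⟨t, h⟩⟩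

end PathSplicing

section Lines

variable {E : Type*} [NormedAddCommGroup E] [NormedSpace ℝ E]

theorem JoinedIn.of_add_smul_mem {S : Set E} {x u : E} {s t : ℝ} (hst : s ≤ t)
    (h : ∀ σ ∈ Icc s t, x + σ • u ∈ S) : JoinedIn S (x + s • u) (x + t • u) :=
  JoinedIn.of_image_Icc_subset (by fun_prop) hst (image_subset_iff.2 h)

theorem JoinedIn.add_const_of_forall_segment {S : Set E} {a b u : E}
    (h : ∀ w ∈ segment ℝ a b, w + u ∈ S) : JoinedIn S (a + u) (b + u) := by
  refine JoinedIn.of_segment_subset ?_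
  rw [add_comm a, add_comm b, ← segment_translate_image]
  rintro _ ⟨w, hw, rfl⟩
  simpa [add_comm] using h w hw

theorem HasFDerivAt.hasDerivAt_add_smul {F : Type*} [NormedAddCommGroup F] [NormedSpace ℝ F]
    {g : E → F} {g' : E →L[ℝ] F} {x u : E} {t : ℝ} (hg : HasFDerivAt g g' (x + t • u)) :
    HasDerivAt (fun s : ℝ => g (x + s • u)) (g' u) t :=
  hg.comp_hasDerivAt t (by simpa using ((hasDerivAt_id t).smul_const u).const_add x)

theorem strictAntiOn_add_smul_of_fderiv_neg {f : E → ℝ} (hf : Differentiable ℝ f) {x u : E}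
    {s : Set ℝ} (hs : Convex ℝ s) (h : ∀ τ ∈ s, fderiv ℝ f (x + τ • u) u < 0) :
    StrictAntiOn (fun τ : ℝ => f (x + τ • u)) s :=
  strictAntiOn_of_deriv_neg hs (hf.continuous.comp (by fun_prop)).continuousOn fun τ hτ => by
    rw [((hf _).hasFDerivAt.hasDerivAt_add_smul).deriv]
    exact h τ (interior_subset hτ)

theorem exists_ball_fderiv_apply_neg {f : E → ℝ} (hf : ContDiff ℝ 1 f) {z : E}
    (hz : fderiv ℝ f z ≠ 0) {ε : ℝ} (hε : 0 < ε) :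
    ∃ r > 0, r ≤ ε ∧ ∃ u : E, ‖u‖ < r / 2 ∧ ∀ y ∈ ball z r, fderiv ℝ f y u < 0 := by
  obtain ⟨v, hv⟩ : ∃ v, fderiv ℝ f z v < 0 := by
    obtain ⟨v, hv⟩ := DFunLike.ne_iff.1 hz
    rcases (show fderiv ℝ f z v ≠ 0 from hv).lt_or_gt with hneg | hpos
    · exact ⟨v, hneg⟩
    · exact ⟨-v, by simpa using hpos⟩
  have hopen : IsOpen {y | fderiv ℝ f y v < 0} :=
    isOpen_lt ((hf.continuous_fderiv one_ne_zero).clm_apply continuous_const) continuous_const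
  obtain ⟨r₀, hr₀, hball⟩ := Metric.isOpen_iff.1 hopen z hv
  have hvpos : 0 < ‖v‖ := norm_pos_iff.2 (by rintro rfl; simp at hv)
  set r := min r₀ ε
  have hr : 0 < r := lt_min hr₀ hε
  refine ⟨r, hr, min_le_right _ _, (r / (4 * ‖v‖)) • v, ?_, fun y hy => ?_⟩
  · rw [norm_smul, Real.norm_of_nonneg (by positivity)]
    field_simp
    linarith
  · rw [map_smul, smul_eq_mul]
    exact mul_neg_of_pos_of_neg (by positivity)
      (hball (ball_subset_ball (min_le_left _ _) hy))

theorem exists_descent_tube {f : E → ℝ} (hf : ContDiff ℝ 1 f) {z : E} (hz : fderiv ℝ f z ≠ 0)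
    {ε : ℝ} (hε : 0 < ε) :
    ∃ u : E, ∃ δ > 0, ∀ x ∈ ball z δ, AntitoneOn (fun τ : ℝ => f (x + τ • u)) (Icc 0 1) ∧
      f (x + u) < f z ∧ ∀ τ ∈ Icc (0 : ℝ) 1, x + τ • u ∈ ball z ε := by
  obtain ⟨r, hr, hrε, u, hu, hdesc⟩ := exists_ball_fderiv_apply_neg hf hz hε
  have hline : ∀ x ∈ ball z (r / 2), ∀ τ ∈ Icc (0 : ℝ) 1, x + τ • u ∈ ball z r := by
    intro x hx τ hτ
    have : ‖τ • u‖ < r / 2 := by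
      rw [norm_smul, Real.norm_of_nonneg hτ.1]
      nlinarith [norm_nonneg u, hτ.2]
    rw [mem_ball, dist_eq_norm, add_sub_right_comm]
    calc ‖x - z + τ • u‖ ≤ ‖x - z‖ + ‖τ • u‖ := norm_add_le _ _
      _ < r / 2 + r / 2 := add_lt_add (mem_ball_iff_norm.1 hx) this
      _ = r := by ring
  have hanti : ∀ x ∈ ball z (r / 2), StrictAntiOn (fun τ : ℝ => f (x + τ • u)) (Icc 0 1) :=
    fun x hx => strictAntiOn_add_smul_of_fderiv_neg (hf.differentiable one_ne_zero)
      (convex_Icc 0 1) fun τ hτ => hdesc _ (hline x hx τ hτ)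
  have hzu : f (z + u) < f z := by
    simpa using hanti z (mem_ball_self (half_pos hr)) (left_mem_Icc.2 zero_le_one)
      (right_mem_Icc.2 zero_le_one) one_pos
  obtain ⟨δ, hδ, hbelow⟩ := Metric.eventually_nhds_iff_ball.1
    ((hf.continuous.comp (continuous_add_const u)).continuousAt.eventually_lt
      continuousAt_const hzu)
  have hsub : ball z (min δ (r / 2)) ⊆ ball z (r / 2) := ball_subset_ball (min_le_right _ _)
  refine ⟨u, min δ (r / 2), lt_min hδ (half_pos hr), fun x hx => ⟨(hanti x (hsub hx)).antitoneOn,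
    hbelow x (ball_subset_ball (min_le_left _ _) hx),
    fun τ hτ => ball_subset_ball hrε (hline x (hsub hx) τ hτ)⟩⟩

theorem isCoercive_of_apply_self_pos [FiniteDimensional ℝ E] {B : E →L[ℝ] E →L[ℝ] ℝ}
    (hB : ∀ v ≠ 0, 0 < B v v) : IsCoercive B := by
  rcases subsingleton_or_nontrivial E with hE | hE
  · exact ⟨1, one_pos, fun u => by simp [Subsingleton.elim u 0]⟩
  obtain ⟨v₀, hv₀, hmin⟩ := (isCompact_sphere (0 : E) 1).exists_isMinOn
    (NormedSpace.sphere_nonempty.2 zero_le_one)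
    (by fun_prop : Continuous fun v => B v v).continuousOn
  refine ⟨B v₀ v₀, hB v₀ (ne_zero_of_mem_unit_sphere ⟨v₀, hv₀⟩), fun u => ?_⟩
  rcases eq_or_ne u 0 with rfl | hu
  · simp
  have hnorm : 0 < ‖u‖ := norm_pos_iff.2 hu
  have := hmin (show ‖u‖⁻¹ • u ∈ sphere (0 : E) 1 by simp [norm_smul, hu])
  simp only [mem_ofPred, map_smul, smul_apply, smul_eq_mul] at this
  rw [le_inv_mul_iff₀ hnorm, le_inv_mul_iff₀ hnorm] at this
  linarith

theorem apply_self_pos_of_norm_sub_lt {A B : E →L[ℝ] E →L[ℝ] ℝ} {C : ℝ}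
    (hB : ∀ u, C * ‖u‖ * ‖u‖ ≤ B u u) (hAB : ‖A - B‖ < C) {v : E} (hv : v ≠ 0) :
    0 < A v v := by
  have hdiff : |A v v - B v v| ≤ ‖A - B‖ * ‖v‖ * ‖v‖ := by
    simpa using (A - B).le_opNorm₂ v v
  have hnorm : 0 < ‖v‖ * ‖v‖ := by positivity
  nlinarith [abs_le.1 hdiff, hB v]

theorem eventually_lt_of_fderiv_eq_zero_of_isCoercive {f : E → ℝ} {z : E}
    (hf : ContDiff ℝ 2 f) (hz : fderiv ℝ f z = 0) (hB : IsCoercive (fderiv ℝ (fderiv ℝ f) z)) :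
    ∀ᶠ x in 𝓝[≠] z, f z < f x := by
  obtain ⟨C, hC, hcoer⟩ := hB
  have hf' : ContDiff ℝ 1 (fderiv ℝ f) := hf.fderiv_right le_rfl
  obtain ⟨ρ, hρ, hclose⟩ := Metric.eventually_nhds_iff_ball.1
    ((hf'.continuous_fderiv one_ne_zero).continuousAt.eventually (ball_mem_nhds _ hC))
  filter_upwards [inter_mem_nhdsWithin _ (ball_mem_nhds z hρ)] with x ⟨hxz, hx⟩
  set h := x - z
  have hline : ∀ t ∈ Icc (0 : ℝ) 1, z + t • h ∈ ball z ρ := fun t ht =>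
    (convex_ball z ρ).add_smul_sub_mem (mem_ball_self hρ) hx ht
  have hDf : ∀ t : ℝ, HasDerivAt (fun s : ℝ => fderiv ℝ f (z + s • h) h)
      (fderiv ℝ (fderiv ℝ f) (z + t • h) h h) t := fun t => by
    simpa using ((hf'.differentiable one_ne_zero _).hasFDerivAt.hasDerivAt_add_smul).clm_apply
      (hasDerivAt_const t h)
  have hf1 : ∀ t : ℝ, HasDerivAt (fun s : ℝ => f (z + s • h)) (fderiv ℝ f (z + t • h) h) t :=
    fun t => (hf.differentiable two_ne_zero _).hasFDerivAt.hasDerivAt_add_smul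
  have hDf_mono : StrictMonoOn (fun t : ℝ => fderiv ℝ f (z + t • h) h) (Icc 0 1) :=
    strictMonoOn_of_hasDerivWithinAt_pos (convex_Icc 0 1)
      (fun t _ => (hDf t).continuousAt.continuousWithinAt) (fun t _ => (hDf t).hasDerivWithinAt)
      fun t ht => apply_self_pos_of_norm_sub_lt hcoer
        (by simpa [dist_eq_norm] using hclose _ (hline t (interior_subset ht)))
        (sub_ne_zero.2 hxz)
  have hf_mono : StrictMonoOn (fun t : ℝ => f (z + t • h)) (Icc 0 1) :=
    strictMonoOn_of_hasDerivWithinAt_pos (convex_Icc 0 1)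
      (fun t _ => (hf1 t).continuousAt.continuousWithinAt) (fun t _ => (hf1 t).hasDerivWithinAt)
      fun t ht => by
        rw [interior_Icc] at ht
        simpa [hz] using hDf_mono (left_mem_Icc.2 zero_le_one) (Ioo_subset_Icc_self ht) ht.1
  simpa [h] using hf_mono (left_mem_Icc.2 zero_le_one) (right_mem_Icc.2 zero_le_one) one_pos

end Lines

open Matrix

theorem Matrix.IsHermitian.posDef_of_eigenvalue_pos {n : Type*} [Fintype n] [DecidableEq n]
    {A : Matrix n n ℝ} (hA : A.IsHermitian)
    (h : ∀ (μ : ℝ) (v : n → ℝ), v ≠ 0 → A *ᵥ v = μ • v → 0 < μ) : A.PosDef :=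
  hA.posDef_iff_eigenvalues_pos.2 fun i =>
    h _ _ (by simpa using hA.eigenvectorBasis.orthonormal.ne_zero i)
      (hA.mulVec_eigenvectorBasis i)

section Valley

variable {d : ℕ} {V : EuclideanSpace ℝ (Fin d) → ℝ}

theorem commHeight_le_of_joinedIn {x z : EuclideanSpace ℝ (Fin d)} {c : ℝ}
    (h : JoinedIn {w | V w ≤ c} x z) : commHeight V x z ≤ c :=
  csInf_le ⟨V z, by rintro b ⟨γ, hγ⟩; simpa using hγ 1⟩ ⟨h.somePath, h.somePath_mem⟩

theorem le_commHeight_of_forall_path (hV : Continuous V) {x z : EuclideanSpace ℝ (Fin d)}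
    {c : ℝ} (h : ∀ γ : Path x z, ∃ t, c ≤ V (γ t)) : c ≤ commHeight V x z := by
  obtain ⟨b, hb⟩ := (isCompact_range (hV.comp (Path.segment x z).continuous)).bddAbove
  refine le_csInf ⟨b, Path.segment x z, fun t => hb ⟨t, rfl⟩⟩ ?_
  rintro b ⟨γ, hγ⟩
  obtain ⟨t, ht⟩ := h γ
  exact ht.trans (hγ t)

theorem le_commHeight (hV : Continuous V) (x z : EuclideanSpace ℝ (Fin d)) :
    V z ≤ commHeight V x z :=
  le_commHeight_of_forall_path hV fun _ => ⟨1, by simp⟩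

theorem lt_commHeight_of_lt_on_sphere (hV : Continuous V) {y z : EuclideanSpace ℝ (Fin d)}
    {ρ : ℝ} (hρ : 0 ≤ ρ) (hy : ρ < dist y z) (h : ∀ x ∈ sphere z ρ, V z < V x) :
    V z < commHeight V y z := by
  have hcross (γ : Path y z) : ∃ t, γ t ∈ sphere z ρ :=
    intermediate_value_univ 1 0 (by fun_prop : Continuous fun t => dist (γ t) z)
      ⟨by simpa using hρ, by simpa using hy.le⟩
  obtain ⟨t₀, ht₀⟩ := hcross (Path.segment y z)
  obtain ⟨x₀, hx₀, hmin⟩ := (isCompact_sphere z ρ).exists_isMinOn ⟨_, ht₀⟩ hV.continuousOn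
  refine (h x₀ hx₀).trans_le (le_commHeight_of_forall_path hV fun γ => ?_)
  obtain ⟨t, ht⟩ := hcross γ
  exact ⟨t, hmin ht⟩

theorem openValley_eq_empty_of_eventually_lt (hV : Continuous V) {z : EuclideanSpace ℝ (Fin d)}
    (h : ∀ᶠ x in 𝓝[≠] z, V z < V x) : openValley V z = ∅ := by
  obtain ⟨ρ, hρ, hball⟩ := Metric.eventually_nhds_iff_ball.1 (eventually_nhdsWithin_iff.1 h)
  refine eq_empty_of_forall_notMem fun y ⟨hcomm, hy⟩ => ?_
  have hyz : y ≠ z := by rintro rfl; exact hy.false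
  rcases lt_or_ge (dist y z) ρ with hyρ | hyρ
  · exact (hball y hyρ hyz).not_gt hy
  · have hsphere : ∀ x ∈ sphere z (ρ / 2), V z < V x := fun x hx => by
      refine hball x (by rw [mem_ball, mem_sphere.1 hx]; linarith) ?_
      rintro rfl; simp at hx; linarith
    exact (lt_commHeight_of_lt_on_sphere hV (half_pos hρ).le (by linarith) hsphere).ne' hcomm

theorem not_isSaddle_of_eventually_lt (hV : Continuous V) {z : EuclideanSpace ℝ (Fin d)}
    (h : ∀ᶠ x in 𝓝[≠] z, V z < V x) : ¬ IsSaddle V z := by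
  rintro ⟨ε, -, hne, -⟩
  simp [openValley_eq_empty_of_eventually_lt hV h] at hne

theorem add_smul_mem_openValley_s1 (hV : Continuous V) {z u x : EuclideanSpace ℝ (Fin d)} {δ τ : ℝ}
    (htube : ∀ x ∈ ball z δ, AntitoneOn (fun τ : ℝ => V (x + τ • u)) (Icc 0 1) ∧ V (x + u) < V z)
    (hx : x ∈ ball z δ) (hτ : τ ∈ Icc (0 : ℝ) 1) (hlt : V (x + τ • u) < V z) :
    x + τ • u ∈ openValley V z := by
  refine ⟨le_antisymm (commHeight_le_of_joinedIn ?_) (le_commHeight hV _ _), hlt⟩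
  have hz : z ∈ ball z δ := mem_ball_self (pos_of_mem_ball hx)
  have down : JoinedIn {w | V w ≤ V z} (x + τ • u) (x + u) := by
    simpa using JoinedIn.of_add_smul_mem hτ.2 fun σ hσ =>
      (htube x hx).1 hτ ⟨hτ.1.trans hσ.1, hσ.2⟩ hσ.1 |>.trans hlt.le
  have across : JoinedIn {w | V w ≤ V z} (x + u) (z + u) :=
    JoinedIn.add_const_of_forall_segment fun w hw =>
      (htube w ((convex_ball z δ).segment_subset hx hz hw)).2.le
  have up : JoinedIn {w | V w ≤ V z} z (z + u) := by
    simpa using JoinedIn.of_add_smul_mem (S := {w | V w ≤ V z}) zero_le_one fun σ hσ => by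
      simpa using (htube z hz).1 (left_mem_Icc.2 zero_le_one) hσ hσ.1
  exact (down.trans across).trans up.symm

theorem exists_joinedIn_openValley_of_fderiv_ne_zero (hV : ContDiff ℝ 1 V)
    {z : EuclideanSpace ℝ (Fin d)} (hz : fderiv ℝ V z ≠ 0) {ε : ℝ} (hε : 0 < ε) :
    ∃ δ > 0, ∀ a ∈ openValley V z ∩ ball z ε ∩ ball z δ, ∀ b ∈ openValley V z ∩ ball z ε ∩ ball z δ,
      JoinedIn (openValley V z ∩ ball z ε) a b := by
  obtain ⟨u, δ, hδ, htube⟩ := exists_descent_tube hV hz hε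
  have hmem (x) (hx : x ∈ ball z δ) (τ) (hτ : τ ∈ Icc (0 : ℝ) 1) (hlt : V (x + τ • u) < V z) :
      x + τ • u ∈ openValley V z ∩ ball z ε :=
    ⟨add_smul_mem_openValley_s1 hV.continuous (fun y hy => ⟨(htube y hy).1, (htube y hy).2.1⟩)
      hx hτ hlt, (htube x hx).2.2 τ hτ⟩
  refine ⟨δ, hδ, fun a ⟨⟨ha, _⟩, haδ⟩ b ⟨⟨hb, _⟩, hbδ⟩ => ?_⟩
  have down (x) (hx : x ∈ openValley V z) (hxδ : x ∈ ball z δ) :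
      JoinedIn (openValley V z ∩ ball z ε) x (x + u) := by
    simpa using JoinedIn.of_add_smul_mem zero_le_one fun σ hσ => hmem x hxδ σ hσ <|
      ((htube x hxδ).1 (left_mem_Icc.2 zero_le_one) hσ hσ.1).trans_lt (by simpa using hx.2)
  have across : JoinedIn (openValley V z ∩ ball z ε) (a + u) (b + u) :=
    JoinedIn.add_const_of_forall_segment fun w hw => by
      have hwδ := (convex_ball z δ).segment_subset haδ hbδ hw
      simpa using hmem w hwδ 1 (right_mem_Icc.2 zero_le_one) (by simpa using (htube w hwδ).2.1)
  exact ((down a ha haδ).trans across).trans (down b hb hbδ).symm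

theorem not_isSaddle_of_fderiv_ne_zero (hV : ContDiff ℝ 1 V) {z : EuclideanSpace ℝ (Fin d)}
    (hz : fderiv ℝ V z ≠ 0) : ¬ IsSaddle V z := by
  rintro ⟨ε, hε, hne, hnpc, hpc⟩
  obtain ⟨δ, hδ, hjoin⟩ := exists_joinedIn_openValley_of_fderiv_ne_zero hV hz hε
  rw [union_singleton, insert_inter_of_mem (mem_ball_self hε)] at hpc
  exact hnpc (hpc.of_insert (fun h => h.1.2.false) hne (ball_mem_nhds z hδ) hjoin)

theorem hessianMatrix_eq_toMatrix (hV : ContDiff ℝ 2 V) (z : EuclideanSpace ℝ (Fin d)) :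
    hessianMatrix V z = LinearMap.BilinForm.toMatrix (EuclideanSpace.basisFun (Fin d) ℝ).toBasis
      (fderiv ℝ (fderiv ℝ V) z).toBilinForm := by
  ext i j
  have hdiff : DifferentiableAt ℝ (fderiv ℝ V) z :=
    (hV.fderiv_right le_rfl).differentiable one_ne_zero z
  simp [hessianMatrix, fderiv_clm_apply hdiff (differentiableAt_const _)]

theorem fderiv_fderiv_apply_eq_dotProduct (hV : ContDiff ℝ 2 V) (z v : EuclideanSpace ℝ (Fin d)) :
    fderiv ℝ (fderiv ℝ V) z v v = v.ofLp ⬝ᵥ hessianMatrix V z *ᵥ v.ofLp := by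
  have hrepr : (EuclideanSpace.basisFun (Fin d) ℝ).repr.symm v = v := by
    rw [LinearIsometryEquiv.symm_apply_eq]; ext i; simp
  rw [hessianMatrix_eq_toMatrix hV, LinearMap.BilinForm.dotProduct_toMatrix_mulVec]
  simp [hrepr]

theorem isHermitian_hessianMatrix (hV : ContDiff ℝ 2 V) (z : EuclideanSpace ℝ (Fin d)) :
    (hessianMatrix V z).IsHermitian := by
  refine Matrix.IsHermitian.ext fun i j => ?_
  simp only [hessianMatrix_eq_toMatrix hV, LinearMap.BilinForm.toMatrix_apply, star_trivial]
  exact hV.contDiffAt.isSymmSndFDerivAt (by simp) _ _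

theorem isCoercive_of_posDef_hessianMatrix (hV : ContDiff ℝ 2 V) {z : EuclideanSpace ℝ (Fin d)}
    (hH : (hessianMatrix V z).PosDef) : IsCoercive (fderiv ℝ (fderiv ℝ V) z) :=
  isCoercive_of_apply_self_pos fun v hv => by
    rw [fderiv_fderiv_apply_eq_dotProduct hV]
    simpa using hH.dotProduct_mulVec_pos (x := v.ofLp) (by simpa using hv)

end Valley

/-- If `V` is `C²` and `z` is a saddle, then the Hessian of `V` at `z` has at least one
eigenvalue `≤ 0`. -/
theorem saddle_hessian_has_nonpos_eigenvalue {d : ℕ} (V : EuclideanSpace ℝ (Fin d) → ℝ)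
    (hV : ContDiff ℝ 2 V) (z : EuclideanSpace ℝ (Fin d)) (hz : IsSaddle V z) :
    ∃ μ : ℝ, μ ≤ 0 ∧ ∃ v : Fin d → ℝ, v ≠ 0 ∧
      (hessianMatrix V z).mulVec v = μ • v := by
  have hcrit : fderiv ℝ V z = 0 := by
    by_contra h
    exact not_isSaddle_of_fderiv_ne_zero (hV.of_le one_le_two) h hz
  by_contra! hpos
  have hH : (hessianMatrix V z).PosDef :=
    (isHermitian_hessianMatrix hV z).posDef_of_eigenvalue_pos fun μ v hv hμ =>
      lt_of_not_ge fun h => hpos μ h v hv hμ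
  exact not_isSaddle_of_eventually_lt hV.continuous
    (eventually_lt_of_fderiv_eq_zero_of_isCoercive hV hcrit
      (isCoercive_of_posDef_hessianMatrix hV hH)) hz
end
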